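/- arXiv:1009.3345 — 2 statements merged into one kernel-verified Lean document; each statement's English description precedes it below -/
import Mathlib

section
/- Let H be an L×L complex matrix with singular values σ₁ ≥ σ₂ ≥ … ≥ σ_L and SVD H = V Σ U†. Let G be the L×N matrix formed by the last N columns of V (those corresponding to σ_{L−N+1},…,σ_L), let F be the L×M matrix formed by the first M columns of U, and let F̂ be any L×M matrix with orthonormal columns. Then ‖G† H F̂‖_F² ≤ σ_{L−N+1}² · M ε, where ε := 1 − ‖F† F̂‖_F²/M. -/
/-!
Put `W := Uᴴ F̂`; it again has orthonormal columns, so the squared norms of its rows are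
nonnegative and add up to `M`. Since `Vᴴ V = 1`, the matrix `Gᴴ H F̂` consists of the last `N`
rows of `Σ W`, while `Fᴴ F̂` consists of the first `M` rows of `W`. As `N + M ≤ L` these row sets
are disjoint, so the last `N` rows of `W` carry weight at most `M - ‖Fᴴ F̂‖_F² = M ε`, and on them
`Σ` is bounded by `σ_{L-N+1}`.
-/

open Matrix

/-- Squared Frobenius norm of a complex matrix. -/
noncomputable def frobSq {m n : Type*} [Fintype m] [Fintype n] (X : Matrix m n ℂ) : ℝ :=
  ∑ i, ∑ j, ‖X i j‖ ^ 2

theorem conjTranspose_mul_self_apply_self {m n : Type*} [Fintype m] (X : Matrix m n ℂ) (j : n) :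
    (Xᴴ * X) j j = ((∑ i, ‖X i j‖ ^ 2 : ℝ) : ℂ) := by
  simp [mul_apply, Complex.conj_mul']

section RowNorms

variable {m n : Type*} [Fintype n]

noncomputable def rowNormSq (X : Matrix m n ℂ) (i : m) : ℝ :=
  ∑ j, ‖X i j‖ ^ 2

theorem rowNormSq_nonneg (X : Matrix m n ℂ) (i : m) : 0 ≤ rowNormSq X i :=
  Finset.sum_nonneg fun _ _ => sq_nonneg _

theorem frobSq_submatrix_id {p : Type*} [Fintype p] (X : Matrix m n ℂ) (r : p → m) :
    frobSq (X.submatrix r id) = ∑ i, rowNormSq X (r i) :=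
  rfl

theorem rowNormSq_diagonal_mul [Fintype m] [DecidableEq m] (d : m → ℝ) (X : Matrix m n ℂ)
    (i : m) : rowNormSq (diagonal (fun k => (d k : ℂ)) * X) i = d i ^ 2 * rowNormSq X i := by
  simp only [rowNormSq, diagonal_mul, norm_mul, mul_pow, Complex.norm_real, Real.norm_eq_abs,
    sq_abs, Finset.mul_sum]

theorem sum_rowNormSq_of_conjTranspose_mul_self_eq_one [Fintype m] [DecidableEq n]
    {X : Matrix m n ℂ} (hX : Xᴴ * X = 1) : ∑ i, rowNormSq X i = Fintype.card n := by
  have hcol (j : n) : ∑ i, ‖X i j‖ ^ 2 = 1 := by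
    have h := conjTranspose_mul_self_apply_self X j
    rw [hX, one_apply_eq] at h
    exact_mod_cast h.symm
  simp only [rowNormSq]
  rw [Finset.sum_comm]
  simp [hcol]

end RowNorms

theorem sum_comp_add_sum_comp_le_sum {ι ι' κ β : Type*} [Fintype ι] [Fintype ι'] [Fintype κ]
    [AddCommMonoid β] [PartialOrder β] [IsOrderedAddMonoid β] {f : κ → β} (hf : ∀ k, 0 ≤ f k) {e : ι → κ} {e' : ι' → κ} (he : e.Injective)
    (he' : e'.Injective) (hee' : ∀ i j, e i ≠ e' j) :
    ∑ i, f (e i) + ∑ j, f (e' j) ≤ ∑ k, f k := by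
  have hinj : (Sum.elim e e').Injective := Sum.elim_injective.mpr ⟨he, he', hee'⟩
  calc ∑ i, f (e i) + ∑ j, f (e' j) = ∑ k ∈ Finset.univ.map ⟨_, hinj⟩, f k := by
        simp [Fintype.sum_sum_type]
    _ ≤ ∑ k, f k := Finset.sum_le_univ_sum_of_nonneg hf

theorem conjTranspose_submatrix_mul {l m n p α : Type*} [Fintype m] [Star α] [Mul α]
    [AddCommMonoid α] (A : Matrix m n α) (B : Matrix m p α) (e : l → n) :
    (A.submatrix id e)ᴴ * B = (Aᴴ * B).submatrix e id := by
  simpa using submatrix_mul_equiv Aᴴ B e (Equiv.refl m) id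

theorem frobSq_diagonal_mul_submatrix_le {κ n ι ι' : Type*} [Fintype κ] [DecidableEq κ]
    [Fintype n] [DecidableEq n] [Fintype ι] [Fintype ι'] {W : Matrix κ n ℂ} (hW : Wᴴ * W = 1)
    {e : ι → κ} {e' : ι' → κ} (he : e.Injective) (he' : e'.Injective)
    (hee' : ∀ i j, e i ≠ e' j) {σ : κ → ℝ} {c : ℝ} (hσc : ∀ i, |σ (e i)| ≤ c) :
    frobSq ((diagonal (fun k => (σ k : ℂ)) * W).submatrix e id)
      ≤ c ^ 2 * (Fintype.card n - frobSq (W.submatrix e' id)) := by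
  rw [frobSq_submatrix_id, frobSq_submatrix_id]
  have hsplit := sum_comp_add_sum_comp_le_sum (rowNormSq_nonneg W) he he' hee'
  rw [sum_rowNormSq_of_conjTranspose_mul_self_eq_one hW] at hsplit
  calc ∑ i, rowNormSq (diagonal (fun k => (σ k : ℂ)) * W) (e i)
      = ∑ i, σ (e i) ^ 2 * rowNormSq W (e i) := by simp only [rowNormSq_diagonal_mul]
    _ ≤ ∑ i, c ^ 2 * rowNormSq W (e i) := by
      refine Finset.sum_le_sum fun i _ => mul_le_mul_of_nonneg_right ?_ (rowNormSq_nonneg W _)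
      exact sq_le_sq.mpr ((hσc i).trans (le_abs_self c))
    _ ≤ c ^ 2 * (Fintype.card n - ∑ j, rowNormSq W (e' j)) := by
      rw [← Finset.mul_sum]
      gcongr
      linarith

/-- with `H = V Σ Uᴴ` an SVD of the `L × L` matrix `H` with decreasingly ordered
nonnegative singular values `σ`, `G` the last `N` columns of `V`, `F` the first `M` columns of
`U`, and `F̂` any `L × M` matrix with orthonormal columns, one has
`‖Gᴴ H F̂‖_F² ≤ σ_{L-N+1}² · M ε`, where `ε = 1 - ‖Fᴴ F̂‖_F² / M`. -/
theorem stmt4 {L N M : ℕ} (hN : 0 < N) (hM : 0 < M) (hNM : N + M ≤ L)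
    (H V U : Matrix (Fin L) (Fin L) ℂ) (σ : Fin L → ℝ)
    (hσ0 : ∀ k, 0 ≤ σ k) (hσ : Antitone σ)
    (hV : V ∈ Matrix.unitaryGroup (Fin L) ℂ)
    (hU : U ∈ Matrix.unitaryGroup (Fin L) ℂ)
    (hH : H = V * Matrix.diagonal (fun k => (σ k : ℂ)) * Uᴴ)
    (G : Matrix (Fin L) (Fin N) ℂ)
    (hG : ∀ i (j : Fin N), G i j = V i ⟨L - N + j.1, by omega⟩)
    (F : Matrix (Fin L) (Fin M) ℂ)
    (hF : ∀ i (j : Fin M), F i j = U i ⟨j.1, by omega⟩)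
    (Fhat : Matrix (Fin L) (Fin M) ℂ) (hFhat : Fhatᴴ * Fhat = 1)
    (eps : ℝ) (heps : eps = 1 - frobSq (Fᴴ * Fhat) / M) :
    frobSq (Gᴴ * H * Fhat) ≤ (σ ⟨L - N, by omega⟩) ^ 2 * (M * eps) := by
  let last : Fin N → Fin L := fun j => ⟨L - N + j, by omega⟩
  let first : Fin M → Fin L := fun j => ⟨j, by omega⟩
  have hVV : Vᴴ * V = 1 := hV.1
  have hUU : U * Uᴴ = 1 := hU.2
  set W := Uᴴ * Fhat
  have hW : Wᴴ * W = 1 := by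
    rw [conjTranspose_mul, conjTranspose_conjTranspose, Matrix.mul_assoc, ← Matrix.mul_assoc U,
      hUU, Matrix.one_mul, hFhat]
  have hGHF : Gᴴ * H * Fhat = (diagonal (fun k => (σ k : ℂ)) * W).submatrix last id := by
    rw [show G = V.submatrix id last from Matrix.ext hG, Matrix.mul_assoc,
      conjTranspose_submatrix_mul, hH]
    simp only [W, ← Matrix.mul_assoc, hVV, Matrix.one_mul]
  have hFF : Fᴴ * Fhat = W.submatrix first id := by
    rw [show F = U.submatrix id first from Matrix.ext hF, conjTranspose_submatrix_mul]
  have hlast : last.Injective := fun i j h => by simpa [last, Fin.ext_iff] using h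
  have hfirst : first.Injective := fun i j h => by simpa [first, Fin.ext_iff] using h
  have hdisj : ∀ i j, last i ≠ first j := fun i j h => by
    simp only [last, first, Fin.ext_iff] at h
    omega
  have hσlast : ∀ i, |σ (last i)| ≤ σ ⟨L - N, by omega⟩ := fun i =>
    (abs_of_nonneg (hσ0 _)).trans_le (hσ (Fin.le_def.mpr (by simp [last])))
  have hbound := frobSq_diagonal_mul_submatrix_le hW hlast hfirst hdisj hσlast
  have hMeps : (M : ℝ) * eps = M - frobSq (Fᴴ * Fhat) := by
    rw [heps]
    field_simp
  rw [hGHF, hMeps, hFF]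
  rwa [Fintype.card_fin] at hbound
end

section
/- Let H be an L×L complex matrix with singular values σ₁ ≥ … ≥ σ_L, and let G, F, F̂ be as follows: G consists of N left singular vectors of H indexed by a set A, F consists of M right singular vectors indexed by a set B with A ∩ B = ∅, and F̂ is an L×M matrix with orthonormal columns with quantization error ε = 1 − ‖F†F̂‖_F²/M. Let D_A := {σ_k : k ∈ A}. Then for any unit vector g in the column space of G and any M×M unitary matrix W, ‖g† H F̂ W‖² ≤ M ε · max_{α ∈ D_A} α². -/
/-!
Write `d = gᴴ V` and `T = Uᴴ F̂`, so that `gᴴ H F̂ W = (d Σ T) W` and `W` can be dropped.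
Since `g` lies in the span of the columns of `V` indexed by `A`, `d` is a unit vector supported
on `A`, and Cauchy–Schwarz bounds `‖d Σ T‖²` by `max_A σ²` times the energy of the rows of `T`
indexed by `A`. As `T` has orthonormal columns its rows carry total energy `M`, of which the rows
indexed by `B` carry `‖Fᴴ F̂‖_F² = M (1 - ε)`; since `A ∩ B = ∅`, the rows in `A` carry at most `M ε`.
-/

open Matrix

section

variable {ι m n : Type*}

lemma ofReal_sum_norm_sq_eq_dotProduct_star [Fintype n] (y : n → ℂ) :
    ((∑ j, ‖y j‖ ^ 2 : ℝ) : ℂ) = y ⬝ᵥ star y := by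
  simp [dotProduct, Complex.mul_conj']

lemma sum_norm_sq_vecMul_of_mul_conjTranspose_eq_one [Fintype n] [DecidableEq n] (x : n → ℂ)
    {W : Matrix n n ℂ} (hW : W * Wᴴ = 1) :
    ∑ j, ‖(x ᵥ* W) j‖ ^ 2 = ∑ j, ‖x j‖ ^ 2 := by
  have h := ofReal_sum_norm_sq_eq_dotProduct_star (x ᵥ* W)
  rw [star_vecMul, dotProduct_mulVec, vecMul_vecMul, hW, vecMul_one,
    ← ofReal_sum_norm_sq_eq_dotProduct_star x] at h
  exact_mod_cast h

lemma frobSq_eq_card_of_conjTranspose_mul_self_eq_one [Fintype m] [Fintype n] [DecidableEq n]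
    {T : Matrix m n ℂ} (hT : Tᴴ * T = 1) : frobSq T = Fintype.card n := by
  have h : ((frobSq T : ℝ) : ℂ) = (Tᴴ * T).trace := by
    simp [frobSq, trace, mul_apply, Complex.conj_mul', Finset.sum_comm (γ := m)]
  rw [hT, trace_one] at h
  exact_mod_cast h

lemma sum_rows_le_card_sub_frobSq_submatrix [Fintype ι] [DecidableEq ι] [Fintype n]
    [DecidableEq n] {T : Matrix ι n ℂ} (hT : Tᴴ * T = 1) {s t : Finset ι} (hst : Disjoint s t) :
    ∑ k ∈ s, ∑ j, ‖T k j‖ ^ 2 ≤ Fintype.card n - frobSq (T.submatrix ((↑) : t → ι) id) := by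
  have ht : frobSq (T.submatrix ((↑) : t → ι) id) = ∑ k ∈ t, ∑ j, ‖T k j‖ ^ 2 :=
    Finset.sum_coe_sort t fun k => ∑ j, ‖T k j‖ ^ 2
  have hst_le : ∑ k ∈ s ∪ t, ∑ j, ‖T k j‖ ^ 2 ≤ frobSq T :=
    Finset.sum_le_sum_of_subset_of_nonneg (Finset.subset_univ _) fun k _ _ => by positivity
  rw [Finset.sum_union hst, frobSq_eq_card_of_conjTranspose_mul_self_eq_one hT] at hst_le
  linarith

lemma star_vecMul_apply_eq_zero_of_mem_span_cols [Fintype m] [DecidableEq n]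
    {V : Matrix m n ℂ} (hV : Vᴴ * V = 1) {s : Set n} {g : m → ℂ}
    (hg : g ∈ Submodule.span ℂ (Set.range fun a : s => fun i => V i a)) {k : n} (hk : k ∉ s) :
    (star g ᵥ* V) k = 0 := by
  suffices Submodule.span ℂ (Set.range fun a : s => fun i => V i a) ≤
      LinearMap.ker ((LinearMap.proj k).comp Vᴴ.mulVecLin) by
    rw [← conjTranspose_conjTranspose V, ← star_mulVec, Pi.star_apply,
      show (Vᴴ *ᵥ g) k = 0 from this hg, star_zero]
  refine Submodule.span_le.mpr ?_
  rintro _ ⟨a, rfl⟩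
  have hka : k ≠ a := fun h => hk (h ▸ a.2)
  change (Vᴴ * V) k a = 0
  rw [hV, one_apply_ne hka]

lemma norm_sq_sum_mul_le (s : Finset ι) (a b : ι → ℂ) :
    ‖∑ k ∈ s, a k * b k‖ ^ 2 ≤ (∑ k ∈ s, ‖a k‖ ^ 2) * ∑ k ∈ s, ‖b k‖ ^ 2 :=
  calc ‖∑ k ∈ s, a k * b k‖ ^ 2 ≤ (∑ k ∈ s, ‖a k‖ * ‖b k‖) ^ 2 := by
        gcongr
        exact (norm_sum_le _ _).trans_eq (by simp only [norm_mul])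
    _ ≤ _ := Finset.sum_mul_sq_le_sq_mul_sq s _ _

lemma sum_norm_sq_vecMul_diagonal_mul_le [Fintype ι] [DecidableEq ι] [Fintype m] (d : ι → ℂ)
    (σ : ι → ℝ) (T : Matrix ι m ℂ) {s : Finset ι} (hs : s.Nonempty) (hd : ∀ k ∉ s, d k = 0) :
    ∑ j, ‖(d ᵥ* (diagonal (fun k => (σ k : ℂ)) * T)) j‖ ^ 2
      ≤ (∑ k, ‖d k‖ ^ 2) * s.sup' hs (fun k => σ k ^ 2) * ∑ k ∈ s, ∑ j, ‖T k j‖ ^ 2 := by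
  set c := s.sup' hs fun k => σ k ^ 2
  have hd_sum : ∑ k ∈ s, ‖d k‖ ^ 2 = ∑ k, ‖d k‖ ^ 2 :=
    Finset.sum_subset (Finset.subset_univ s) fun k _ hk => by simp [hd k hk]
  have hentry : ∀ j, (d ᵥ* (diagonal (fun k => (σ k : ℂ)) * T)) j
      = ∑ k ∈ s, d k * ((σ k : ℂ) * T k j) := fun j => by
    rw [vecMul, dotProduct, ← Finset.sum_subset (Finset.subset_univ s)
      fun k _ hk => by rw [hd k hk, zero_mul]]
    simp [diagonal_mul]
  have hcol : ∀ j, ‖(d ᵥ* (diagonal (fun k => (σ k : ℂ)) * T)) j‖ ^ 2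
      ≤ (∑ k, ‖d k‖ ^ 2) * ∑ k ∈ s, c * ‖T k j‖ ^ 2 := fun j => by
    rw [hentry, ← hd_sum]
    refine (norm_sq_sum_mul_le s _ _).trans (mul_le_mul_of_nonneg_left
      (Finset.sum_le_sum fun k hk => ?_) (by positivity))
    rw [norm_mul, Complex.norm_real, Real.norm_eq_abs, mul_pow, sq_abs]
    exact mul_le_mul_of_nonneg_right (Finset.le_sup' (fun k => σ k ^ 2) hk) (by positivity)
  calc _ ≤ ∑ j, (∑ k, ‖d k‖ ^ 2) * ∑ k ∈ s, c * ‖T k j‖ ^ 2 := Finset.sum_le_sum fun j _ => hcol j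
    _ = _ := by
      rw [← Finset.mul_sum, Finset.sum_comm]
      simp_rw [← Finset.mul_sum]
      ring

end

theorem stmt5_general {L M : ℕ}
    (H V U : Matrix (Fin L) (Fin L) ℂ) (σ : Fin L → ℝ)
    (hV : V ∈ Matrix.unitaryGroup (Fin L) ℂ)
    (hU : U ∈ Matrix.unitaryGroup (Fin L) ℂ)
    (hH : H = V * Matrix.diagonal (fun k => (σ k : ℂ)) * Uᴴ)
    (A B : Finset (Fin L)) (hAB : Disjoint A B)
    (hA : A.Nonempty)
    (F : Matrix (Fin L) B ℂ) (hF : F = U.submatrix id (fun b : B => (b : Fin L)))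
    (Fhat : Matrix (Fin L) (Fin M) ℂ) (hFhat : Fhatᴴ * Fhat = 1)
    (eps : ℝ) (heps : eps = 1 - frobSq (Fᴴ * Fhat) / M)
    (g : Fin L → ℂ)
    (hg : g ∈ Submodule.span ℂ (Set.range fun a : A => (fun i => V i (a : Fin L))))
    (hgnorm : ∑ i, ‖g i‖ ^ 2 = 1)
    (W : Matrix (Fin M) (Fin M) ℂ) (hW : W ∈ Matrix.unitaryGroup (Fin M) ℂ) :
    ∑ j, ‖(Matrix.vecMul (star g) (H * Fhat * W)) j‖ ^ 2
      ≤ M * eps * A.sup' hA (fun k => (σ k) ^ 2) := by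
  set T := Uᴴ * Fhat
  set d := star g ᵥ* V
  have hT : Tᴴ * T = 1 := by
    rw [conjTranspose_mul, conjTranspose_conjTranspose, Matrix.mul_assoc, ← Matrix.mul_assoc U,
      ← star_eq_conjTranspose, mem_unitaryGroup_iff.mp hU, Matrix.one_mul, hFhat]
  have hd_supp : ∀ k ∉ A, d k = 0 := fun k hk =>
    star_vecMul_apply_eq_zero_of_mem_span_cols (mem_unitaryGroup_iff'.mp hV) hg hk
  have hd_norm : ∑ k, ‖d k‖ ^ 2 = 1 := by
    rw [sum_norm_sq_vecMul_of_mul_conjTranspose_eq_one _ (mem_unitaryGroup_iff.mp hV)]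
    simpa using hgnorm
  have hrows : ∑ k ∈ A, ∑ j, ‖T k j‖ ^ 2 ≤ M - frobSq (Fᴴ * Fhat) := by
    have hFT : Fᴴ * Fhat = T.submatrix (↑) id := by
      ext b j; simp [hF, T, mul_apply]
    simpa [hFT] using sum_rows_le_card_sub_frobSq_submatrix hT hAB
  have hMeps : (M : ℝ) * eps = M - frobSq (Fᴴ * Fhat) := by
    -- for `M = 0` the division in `heps` is junk, but then `Fᴴ * Fhat` has no columns
    rcases Nat.eq_zero_or_pos M with rfl | hM
    · simp [frobSq]
    · rw [heps]; field_simp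
  have hfactor : star g ᵥ* (H * Fhat * W) = d ᵥ* (diagonal (fun k => (σ k : ℂ)) * T) ᵥ* W := by
    rw [hH, vecMul_vecMul, vecMul_vecMul]; simp only [T, Matrix.mul_assoc]
  have hsup : 0 ≤ A.sup' hA fun k => σ k ^ 2 :=
    (sq_nonneg _).trans (Finset.le_sup' (fun k => σ k ^ 2) hA.choose_spec)
  rw [hfactor, sum_norm_sq_vecMul_of_mul_conjTranspose_eq_one _ (mem_unitaryGroup_iff.mp hW)]
  refine (sum_norm_sq_vecMul_diagonal_mul_le d σ T hA hd_supp).trans ?_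
  rw [hd_norm, one_mul, hMeps]
  exact (mul_le_mul_of_nonneg_left hrows hsup).trans_eq (mul_comm _ _)

/-- Lemma 1 of the paper, with `P = ν = 1`: if `H = V Σ Uᴴ` is an SVD, `G`
consists of the `N` left singular vectors indexed by `A`, `F` of the `M` right singular
vectors indexed by `B` with `A ∩ B = ∅`, `F̂` has orthonormal columns with quantization error
`ε = 1 - ‖Fᴴ F̂‖_F²/M`, then for every unit vector `g` in the column space of `G` and every
`M × M` unitary `W`, `‖gᴴ H F̂ W‖² ≤ M ε · max_{α ∈ D_A} α²` where `D_A = {σ_k : k ∈ A}`. -/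
theorem stmt5 {L N M : ℕ}
    (H V U : Matrix (Fin L) (Fin L) ℂ) (σ : Fin L → ℝ) (hσ0 : ∀ k, 0 ≤ σ k)
    (hV : V ∈ Matrix.unitaryGroup (Fin L) ℂ)
    (hU : U ∈ Matrix.unitaryGroup (Fin L) ℂ)
    (hH : H = V * Matrix.diagonal (fun k => (σ k : ℂ)) * Uᴴ)
    (A B : Finset (Fin L)) (hAB : Disjoint A B)
    (hAcard : A.card = N) (hBcard : B.card = M) (hA : A.Nonempty)
    (F : Matrix (Fin L) B ℂ) (hF : F = U.submatrix id (fun b : B => (b : Fin L)))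
    (Fhat : Matrix (Fin L) (Fin M) ℂ) (hFhat : Fhatᴴ * Fhat = 1)
    (eps : ℝ) (heps : eps = 1 - frobSq (Fᴴ * Fhat) / M)
    (g : Fin L → ℂ)
    (hg : g ∈ Submodule.span ℂ (Set.range fun a : A => (fun i => V i (a : Fin L))))
    (hgnorm : ∑ i, ‖g i‖ ^ 2 = 1)
    (W : Matrix (Fin M) (Fin M) ℂ) (hW : W ∈ Matrix.unitaryGroup (Fin M) ℂ) :
    ∑ j, ‖(Matrix.vecMul (star g) (H * Fhat * W)) j‖ ^ 2
      ≤ M * eps * A.sup' hA (fun k => (σ k) ^ 2) :=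
  stmt5_general H V U σ hV hU hH A B hAB hA F hF Fhat hFhat eps heps g hg hgnorm W hW
end
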